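/- For a square-summable sequence φ: ℤ^d → ℂ, ‖φ‖_{ℓ∞(ℤ^d)} ≤ (2^{(d−1)·2^{d−1}} / d^{2^{d−2}})^{1/2^d} · ‖∇_D φ‖_{ℓ²(ℤ^d)}^{1/2} · ‖φ‖_{ℓ²(ℤ^d)}^{1/2}, i.e., the case p = 2^{d−1} of the discrete Agmon–Kolmogorov inequality, which has exponent 1/2 on both norms. -/

import Mathlib

noncomputable section

/-- Partial difference operator in direction `i` on ℤ^d. -/
def Dop {d : ℕ} (i : Fin d) (φ : (Fin d → ℤ) → ℂ) : (Fin d → ℤ) → ℂ :=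
  fun ζ => φ (Function.update ζ i (ζ i + 1)) - φ ζ

/-- The ℓ²(ℤ^d) norm. -/
def l2 {d : ℕ} (φ : (Fin d → ℤ) → ℂ) : ℝ := Real.sqrt (∑' ζ : Fin d → ℤ, ‖φ ζ‖ ^ 2)

/-- The ℓ∞(ℤ^d) norm. -/
def lsup {d : ℕ} (φ : (Fin d → ℤ) → ℂ) : ℝ := ⨆ ζ : Fin d → ℤ, ‖φ ζ‖

/-- The ℓ²(ℤ^d) norm of the discrete gradient. -/
def gradn {d : ℕ} (φ : (Fin d → ℤ) → ℂ) : ℝ :=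
  Real.sqrt (∑ i : Fin d, ∑' ζ : Fin d → ℤ, ‖Dop i φ ζ‖ ^ 2)

/-! On the line `t ↦ ζ + t eᵢ` the function `|φ|²` vanishes at `±∞`, so `|φ(ζ)|²` is bounded by
its variation along the line on each side of `ζ`. Hence `2|φ(ζ)|²` is at most the total variation
of `|φ|²` in direction `eᵢ` over `ℤ^d`, which by `|‖a‖² - ‖b‖²| ≤ ‖a - b‖ (‖a‖ + ‖b‖)` and
Cauchy–Schwarz is at most `2 ‖Dᵢφ‖₂ ‖φ‖₂`. Squaring and summing over `i` gives
`d ‖φ‖∞⁴ ≤ ‖∇_D φ‖₂² ‖φ‖₂²`, which beats the stated constant since `2^((d-1) 2^(d-1)) ≥ 1`. -/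

open Filter Topology

theorem Real.summable_and_tsum_mul_le_sqrt_mul_sqrt {ι : Type*} {f g : ι → ℝ}
    (hf : ∀ i, 0 ≤ f i) (hg : ∀ i, 0 ≤ g i)
    (hf₂ : Summable fun i => f i ^ 2) (hg₂ : Summable fun i => g i ^ 2) :
    (Summable fun i => f i * g i) ∧
      ∑' i, f i * g i ≤ √(∑' i, f i ^ 2) * √(∑' i, g i ^ 2) := by
  simp only [← Real.rpow_two, Real.sqrt_eq_rpow] at *
  exact Real.summable_and_inner_le_Lp_mul_Lq_tsum_of_nonneg .two_two hf hg hf₂ hg₂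

theorem two_mul_abs_le_tsum_abs_sub {g : ℤ → ℝ} (hg : Tendsto g cofinite (𝓝 0))
    (hΔ : Summable fun t => |g (t + 1) - g t|) (n : ℤ) :
    2 * |g n| ≤ ∑' t, |g (t + 1) - g t| := by
  set Δ : ℤ → ℝ := fun t => |g (t + 1) - g t|
  have hΔn : Summable fun t => Δ (t + n) := (Equiv.addRight n).summable_iff.mpr hΔ
  have hright : Summable fun k : ℕ => Δ (k + n) := hΔn.comp_injective Nat.cast_injective
  have hleft : Summable fun k : ℕ => Δ (-(k + 1) + n) :=
    hΔn.comp_injective fun a b h => by simpa using h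
  have tendsto_along {u : ℕ → ℤ} (hu : Function.Injective u) : Tendsto (g ∘ u) atTop (𝓝 0) :=
    Nat.cofinite_eq_atTop ▸ hg.comp hu.tendsto_cofinite
  -- `g n` is the telescoping sum of the increments on either side of `n`.
  have right : |g n| ≤ ∑' k : ℕ, Δ (k + n) := by
    have dist_eq (k : ℕ) : dist (g (n + k)) (g (n + (k + 1 : ℕ))) = Δ (k + n) := by
      simp only [Real.dist_eq, abs_sub_comm, Δ]; push_cast; ring_nf
    simpa using dist_le_tsum_of_dist_le_of_tendsto₀ (f := fun k : ℕ => g (n + k)) _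
      (fun k => (dist_eq k).le) hright
      (tendsto_along ((add_right_injective n).comp Nat.cast_injective))
  have left : |g n| ≤ ∑' k : ℕ, Δ (-(k + 1) + n) := by
    have dist_eq (k : ℕ) : dist (g (n - k)) (g (n - (k + 1 : ℕ))) = Δ (-(k + 1) + n) := by
      simp only [Real.dist_eq, Δ]; push_cast; ring_nf
    simpa using dist_le_tsum_of_dist_le_of_tendsto₀ (f := fun k : ℕ => g (n - k)) _
      (fun k => (dist_eq k).le) hleft
      (tendsto_along ((sub_right_injective (b := n)).comp Nat.cast_injective))
  calc 2 * |g n| ≤ ∑' k : ℕ, Δ (k + n) + ∑' k : ℕ, Δ (-(k + 1) + n) := by linarith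
    _ = ∑' t, Δ (t + n) := (hright.tsum_add hleft).symm.trans (tsum_nat_add_neg_add_one hΔn)
    _ = ∑' t, Δ t := (Equiv.addRight n).tsum_eq Δ

theorem abs_sq_norm_sub_sq_norm_le {E : Type*} [SeminormedAddCommGroup E] (a b : E) :
    |‖a‖ ^ 2 - ‖b‖ ^ 2| ≤ ‖a - b‖ * ‖a‖ + ‖a - b‖ * ‖b‖ := by
  calc |‖a‖ ^ 2 - ‖b‖ ^ 2| = |‖a‖ - ‖b‖| * (‖a‖ + ‖b‖) := by
        rw [← abs_of_nonneg (by positivity : 0 ≤ ‖a‖ + ‖b‖), ← abs_mul]; ring_nf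
    _ ≤ ‖a - b‖ * (‖a‖ + ‖b‖) := by gcongr; exact abs_norm_sub_norm_le a b
    _ = _ := mul_add _ _ _

theorem summable_sq_norm_sub {α E : Type*} [SeminormedAddCommGroup E] {f g : α → E}
    (hf : Summable fun x => ‖f x‖ ^ 2) (hg : Summable fun x => ‖g x‖ ^ 2) :
    Summable fun x => ‖f x - g x‖ ^ 2 := by
  refine .of_nonneg_of_le (fun _ => sq_nonneg _) (fun x => ?_) ((hf.add hg).mul_left 2)
  nlinarith [norm_sub_le (f x) (g x), norm_nonneg (f x - g x), sq_nonneg (‖f x‖ - ‖g x‖)]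

theorem summable_and_tsum_abs_sq_norm_comp_sub_le {α E : Type*} [SeminormedAddCommGroup E]
    (σ : α ≃ α) {f : α → E} (hf : Summable fun x => ‖f x‖ ^ 2) :
    (Summable fun x => |‖f (σ x)‖ ^ 2 - ‖f x‖ ^ 2|) ∧
      ∑' x, |‖f (σ x)‖ ^ 2 - ‖f x‖ ^ 2| ≤
        2 * √(∑' x, ‖f (σ x) - f x‖ ^ 2) * √(∑' x, ‖f x‖ ^ 2) := by
  have hfσ : Summable fun x => ‖f (σ x)‖ ^ 2 := σ.summable_iff.mpr hf
  have hdiff := summable_sq_norm_sub hfσ hf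
  obtain ⟨hs₁, hle₁⟩ := Real.summable_and_tsum_mul_le_sqrt_mul_sqrt
    (fun _ => norm_nonneg _) (fun _ => norm_nonneg _) hdiff hfσ
  obtain ⟨hs₂, hle₂⟩ := Real.summable_and_tsum_mul_le_sqrt_mul_sqrt
    (fun _ => norm_nonneg _) (fun _ => norm_nonneg _) hdiff hf
  have hbound x := abs_sq_norm_sub_sq_norm_le (f (σ x)) (f x)
  have hs := Summable.of_nonneg_of_le (fun _ => abs_nonneg _) hbound (hs₁.add hs₂)
  refine ⟨hs, ?_⟩
  calc ∑' x, |‖f (σ x)‖ ^ 2 - ‖f x‖ ^ 2|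
      ≤ ∑' x, ‖f (σ x) - f x‖ * ‖f (σ x)‖ + ∑' x, ‖f (σ x) - f x‖ * ‖f x‖ :=
        (hs.tsum_le_tsum hbound (hs₁.add hs₂)).trans_eq (hs₁.tsum_add hs₂)
    _ ≤ _ := by
      rw [σ.tsum_eq (fun x => ‖f x‖ ^ 2)] at hle₁
      linarith

theorem sq_norm_le_sqrt_mul_sqrt_of_injective_zsmul {G E : Type*} [AddCommGroup G]
    [SeminormedAddCommGroup E] {e : G} (he : Function.Injective fun t : ℤ => t • e)
    {f : G → E} (hf : Summable fun x => ‖f x‖ ^ 2) (x : G) :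
    ‖f x‖ ^ 2 ≤ √(∑' y, ‖f (y + e) - f y‖ ^ 2) * √(∑' y, ‖f y‖ ^ 2) := by
  obtain ⟨hF, hle⟩ := summable_and_tsum_abs_sq_norm_comp_sub_le (Equiv.addRight e) hf
  simp only [Equiv.coe_addRight] at hF hle
  set F : G → ℝ := fun y => |‖f (y + e)‖ ^ 2 - ‖f y‖ ^ 2|
  set line : ℤ → G := fun t => x + t • e
  have hline : Function.Injective line := (add_right_injective x).comp he
  set g : ℤ → ℝ := fun t => ‖f (line t)‖ ^ 2
  have hgF (t : ℤ) : |g (t + 1) - g t| = F (line t) := by simp [g, F, line, add_smul, add_assoc]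
  have hvar := two_mul_abs_le_tsum_abs_sub (g := g)
    (hf.comp_injective hline).tendsto_cofinite_zero
    ((hF.comp_injective hline).congr fun t => (hgF t).symm) 0
  simp only [hgF] at hvar
  calc ‖f x‖ ^ 2 = |g 0| := by simp [g, line]
    _ ≤ (∑' t, F (line t)) / 2 := by linarith
    _ ≤ (∑' y, F y) / 2 := by
      gcongr
      exact hF.comp_injective hline |>.tsum_le_tsum_of_inj line hline
        (fun _ _ => abs_nonneg _) (fun _ => le_rfl) hF
    _ ≤ _ := by linarith

theorem Function.update_add_eq_add_single {ι M : Type*} [DecidableEq ι] [AddCommMonoid M]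
    (f : ι → M) (i : ι) (a : M) : Function.update f i (f i + a) = f + Pi.single i a := by
  ext j
  rcases eq_or_ne j i with rfl | hj <;> simp [*]

theorem sq_norm_le_sqrt_tsum_sq_norm_Dop_mul_l2 {d : ℕ} {φ : (Fin d → ℤ) → ℂ}
    (h : Summable fun ζ => ‖φ ζ‖ ^ 2) (i : Fin d) (ζ : Fin d → ℤ) :
    ‖φ ζ‖ ^ 2 ≤ √(∑' η, ‖Dop i φ η‖ ^ 2) * l2 φ := by
  have he : Function.Injective fun t : ℤ => t • (Pi.single i 1 : Fin d → ℤ) := by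
    intro s t hst
    simpa using congrFun hst i
  simpa [Dop, Function.update_add_eq_add_single, l2] using
    sq_norm_le_sqrt_mul_sqrt_of_injective_zsmul he h ζ

theorem natCast_mul_norm_pow_four_le {d : ℕ} {φ : (Fin d → ℤ) → ℂ}
    (h : Summable fun ζ => ‖φ ζ‖ ^ 2) (ζ : Fin d → ℤ) :
    d * ‖φ ζ‖ ^ 4 ≤ gradn φ ^ 2 * l2 φ ^ 2 := by
  calc d * ‖φ ζ‖ ^ 4 = ∑ _i : Fin d, (‖φ ζ‖ ^ 2) ^ 2 := by
        rw [Finset.sum_const, Finset.card_univ, Fintype.card_fin, nsmul_eq_mul]; ring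
    _ ≤ ∑ i : Fin d, (∑' η, ‖Dop i φ η‖ ^ 2) * l2 φ ^ 2 := by
      gcongr with i
      calc (‖φ ζ‖ ^ 2) ^ 2 ≤ (√(∑' η, ‖Dop i φ η‖ ^ 2) * l2 φ) ^ 2 := by
            gcongr; exact sq_norm_le_sqrt_tsum_sq_norm_Dop_mul_l2 h i ζ
        _ = _ := by rw [mul_pow, Real.sq_sqrt (tsum_nonneg fun _ => sq_nonneg _)]
    _ = gradn φ ^ 2 * l2 φ ^ 2 := by
      rw [← Finset.sum_mul, gradn,
        Real.sq_sqrt (Finset.sum_nonneg fun _ _ => tsum_nonneg fun _ => sq_nonneg _)]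

theorem lsup_le_rpow_mul_rpow_mul_rpow {d : ℕ} (hd : 0 < d) {φ : (Fin d → ℤ) → ℂ}
    (h : Summable fun ζ => ‖φ ζ‖ ^ 2) :
    lsup φ ≤ ((1 : ℝ) / d) ^ ((1 : ℝ) / 4) * gradn φ ^ ((1 : ℝ) / 2) * l2 φ ^ ((1 : ℝ) / 2) := by
  have hG : 0 ≤ gradn φ := Real.sqrt_nonneg _
  have hL : 0 ≤ l2 φ := Real.sqrt_nonneg _
  have hpow : (((1 : ℝ) / d) ^ ((1 : ℝ) / 4) * gradn φ ^ ((1 : ℝ) / 2) * l2 φ ^ ((1 : ℝ) / 2)) ^ 4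
      = gradn φ ^ 2 * l2 φ ^ 2 / d := by
    simp only [mul_pow, ← Real.rpow_natCast, ← Real.rpow_mul hG, ← Real.rpow_mul hL,
      ← Real.rpow_mul (by positivity : (0 : ℝ) ≤ 1 / d)]
    norm_num
    ring
  refine ciSup_le fun ζ => le_of_pow_le_pow_left₀ four_ne_zero (by positivity) ?_
  rw [hpow, le_div_iff₀ (by exact_mod_cast hd), mul_comm]
  exact natCast_mul_norm_pow_four_le h ζ

theorem one_div_rpow_le_agmon_const {d : ℕ} (hd : 1 ≤ d) :
    ((1 : ℝ) / d) ^ ((1 : ℝ) / 4) ≤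
      ((2 : ℝ) ^ ((d - 1) * 2 ^ (d - 1)) / (d : ℝ) ^ (2 ^ (d - 2))) ^ ((1 : ℝ) / 2 ^ d) := by
  -- At `d = 1` the exponent `d - 2` truncates to `0`, so that case is separate.
  obtain rfl | ⟨k, rfl⟩ : d = 1 ∨ ∃ k, d = k + 2 := by
    rcases d with _ | _ | k <;> simp_all
  · norm_num
  · simp only [Nat.add_sub_cancel, show k + 2 - 1 = k + 1 by omega]
    calc ((1 : ℝ) / ↑(k + 2)) ^ ((1 : ℝ) / 4)
        = (((1 : ℝ) / ↑(k + 2)) ^ 2 ^ k) ^ ((1 : ℝ) / 2 ^ (k + 2)) := by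
          rw [← Real.rpow_natCast, ← Real.rpow_mul (by positivity)]
          congr 1
          push_cast
          field_simp
          ring
      _ ≤ _ := by
          rw [one_div_pow]
          gcongr
          exact one_le_pow₀ one_le_two

/-- The balanced case `p = 2^(d-1)` of the Agmon–Kolmogorov inequality on ℓ²(ℤ^d). -/
theorem agmon_kolmogorov_balanced {d : ℕ} (hd : 1 ≤ d) (φ : (Fin d → ℤ) → ℂ)
    (h : Summable fun ζ : Fin d → ℤ => ‖φ ζ‖ ^ 2) :
    lsup φ ≤
      (((2 : ℝ) ^ ((d - 1) * 2 ^ (d - 1)) / (d : ℝ) ^ (2 ^ (d - 2))) ^ ((1 : ℝ) / 2 ^ d)) *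
        gradn φ ^ ((1 : ℝ) / 2) * l2 φ ^ ((1 : ℝ) / 2) := by
  refine (lsup_le_rpow_mul_rpow_mul_rpow hd h).trans ?_
  have hG : 0 ≤ gradn φ := Real.sqrt_nonneg _
  have hL : 0 ≤ l2 φ := Real.sqrt_nonneg _
  gcongr
  exact one_div_rpow_le_agmon_const hd
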